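/- arXiv:2012.02386 — 3 statements merged into one kernel-verified Lean document; each statement's English description precedes it below -/
import Mathlib

section
/- Lemma 2.2 (existence of the Fourier multiplier M). There exist constants c ∈ (0,1) and C > 0 such that for every ν ∈ (0,1) there exists a function M = M(t,k,ξ), defined for t ≥ 0, k ∈ ℤ, ξ ∈ ℝ, which is C¹ in t and in ξ with ∂_t M ≤ 0, satisfying: (i) M(0,k,ξ) = 1 for all k, ξ, and M(t,0,ξ) = 1 for all t, ξ; (ii) c ≤ M(t,k,ξ) ≤ 1 for all t, k, ξ; (iii) −∂_t M(t,k,ξ)/M(t,k,ξ) ≥ |k|/(k² + (ξ − kt)²) for all k ≠ 0; (iv) |∂_ξ M(t,k,ξ)|/M(t,k,ξ) ≤ C/|k| for all k ≠ 0, uniformly in t and ξ; (v) 1 ≤ C ν^{−1/6} ( √(−∂_t M(t,k,ξ) · M(t,k,ξ)) + ν^{1/2} (k² + (ξ − kt)²)^{1/2} ) for all k ≠ 0; (vi) √(−∂_t M(t,k,ξ) · M(t,k,ξ)) ≤ C (1 + (ξ − η)²)^{1/2} √(−∂_t M(t,k,η) · M(t,k,η)) for all k ≠ 0 and all ξ,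 η ∈ ℝ. -/
/-!
The multiplier is `M = exp (-∫₀ᵗ R)` with rate `R(τ) = L_{1/|k|}(ξ - kτ) + L_a(ξ - kτ)`, where
`a = ν^{1/3}` and `L_b(x) = b / (1 + (b x)²)`. Since `L_{1/|k|}(x) = |k| / (k² + x²)`, this gives (iii);
the time integral of `L_b(ξ - kτ)` is a difference of arctangents divided by `k`, so `log M` is
bounded by `2π`. The `ξ`-derivative of `log M` is a difference of Lorentzians divided by `k`,
which gives (iv). For (v): where `a |ξ - kt| ≤ 1` the rate is at least `a / 2`, so
`√(-∂ₜM M) ≳ ν^{1/6}`; elsewhere `ν^{1/2} |ξ - kt| ≥ ν^{1/6}`. Property (vi) is Peetre's inequality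
`1 + u² ≤ 2 (1 + (u - v)²) (1 + v²)` applied to both Lorentzians.
-/

open Set Real

noncomputable def lorentzian (b x : ℝ) : ℝ := b / (1 + (b * x) ^ 2)

/-- `-∫₀ᵗ lorentzian b (ξ - k s) ds` when `k ≠ 0`. -/
noncomputable def arctanPhase (b k ξ t : ℝ) : ℝ := (arctan (b * (ξ - k * t)) - arctan (b * ξ)) / k

section Lorentzian

variable {b : ℝ}

lemma lorentzian_nonneg (hb : 0 ≤ b) (x : ℝ) : 0 ≤ lorentzian b x := by
  unfold lorentzian; positivity

lemma lorentzian_le (hb : 0 ≤ b) (x : ℝ) : lorentzian b x ≤ b :=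
  div_le_self hb (le_add_of_nonneg_right (sq_nonneg _))

lemma abs_lorentzian_sub_le (hb : 0 ≤ b) (x y : ℝ) :
    |lorentzian b x - lorentzian b y| ≤ b :=
  abs_sub_le_of_nonneg_of_le (lorentzian_nonneg hb x) (lorentzian_le hb x)
    (lorentzian_nonneg hb y) (lorentzian_le hb y)

lemma lorentzian_inv_abs {k : ℝ} (hk : k ≠ 0) (x : ℝ) :
    lorentzian |k|⁻¹ x = |k| / (k ^ 2 + x ^ 2) := by
  have hk' : 0 < |k| := abs_pos.mpr hk
  rw [lorentzian, ← sq_abs k]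
  field_simp

lemma half_le_lorentzian (hb : 0 ≤ b) {x : ℝ} (h : |b * x| ≤ 1) : b / 2 ≤ lorentzian b x := by
  have : (b * x) ^ 2 ≤ 1 := by nlinarith [sq_abs (b * x), abs_nonneg (b * x)]
  exact div_le_div_of_nonneg_left hb (by positivity) (by linarith)

lemma one_add_sq_le_two_mul (u v : ℝ) : 1 + u ^ 2 ≤ 2 * (1 + (u - v) ^ 2) * (1 + v ^ 2) := by
  nlinarith [sq_nonneg (u - 2 * v), sq_nonneg ((u - v) * v)]

lemma lorentzian_le_two_mul (hb0 : 0 ≤ b) (hb1 : b ≤ 1) (x y : ℝ) :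
    lorentzian b x ≤ 2 * (1 + (x - y) ^ 2) * lorentzian b y := by
  have hpeetre := one_add_sq_le_two_mul (b * y) (b * x)
  have hscale : (b * y - b * x) ^ 2 ≤ (x - y) ^ 2 := by
    rw [← mul_sub, mul_pow, ← neg_sub x y, neg_sq]
    exact mul_le_of_le_one_left (sq_nonneg _) (pow_le_one₀ hb0 hb1)
  unfold lorentzian
  rw [mul_div_assoc', div_le_div_iff₀ (by positivity) (by positivity)]
  have : 1 + (b * y) ^ 2 ≤ 2 * (1 + (x - y) ^ 2) * (1 + (b * x) ^ 2) := by
    nlinarith [sq_nonneg (b * x)]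
  nlinarith

end Lorentzian

section ArctanPhase

variable {b k ξ t : ℝ}

lemma hasDerivAt_arctanPhase_time (hk : k ≠ 0) :
    HasDerivAt (arctanPhase b k ξ) (-lorentzian b (ξ - k * t)) t := by
  have h : HasDerivAt (fun s => b * (ξ - k * s)) (-(b * k)) t := by
    simpa using ((hasDerivAt_id t).const_mul k).const_sub ξ |>.const_mul b
  refine ((h.arctan.sub_const (arctan (b * ξ))).div_const k).congr_deriv ?_
  rw [lorentzian]
  field_simp

lemma hasDerivAt_arctanPhase_freq :
    HasDerivAt (fun z => arctanPhase b k z t) ((lorentzian b (ξ - k * t) - lorentzian b ξ) / k) ξ := by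
  have h₁ : HasDerivAt (fun z => b * (z - k * t)) b ξ := by
    simpa using ((hasDerivAt_id ξ).sub_const (k * t)).const_mul b
  have h₂ : HasDerivAt (fun z => b * z) b ξ := by
    simpa using (hasDerivAt_id ξ).const_mul b
  refine ((h₁.arctan.sub h₂.arctan).div_const k).congr_deriv ?_
  simp only [lorentzian]
  ring

lemma abs_arctanPhase_le : |arctanPhase b k ξ t| ≤ π / |k| := by
  rw [arctanPhase, abs_div]
  gcongr
  rw [abs_le]
  constructor <;> linarith [neg_pi_div_two_lt_arctan (b * (ξ - k * t)),
    arctan_lt_pi_div_two (b * (ξ - k * t)), neg_pi_div_two_lt_arctan (b * ξ),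
    arctan_lt_pi_div_two (b * ξ)]

lemma arctanPhase_nonpos (hb : 0 ≤ b) (ht : 0 ≤ t) : arctanPhase b k ξ t ≤ 0 := by
  rcases lt_trichotomy k 0 with hk | rfl | hk
  · refine div_nonpos_of_nonneg_of_nonpos (sub_nonneg.mpr ?_) hk.le
    exact arctan_strictMono.monotone (by nlinarith [mul_nonneg hb ht])
  · simp [arctanPhase]
  · refine div_nonpos_of_nonpos_of_nonneg (sub_nonpos.mpr ?_) hk.le
    exact arctan_strictMono.monotone (by nlinarith [mul_nonneg hb ht])

end ArctanPhase

lemma one_le_abs_intCast {k : ℤ} (hk : k ≠ 0) : (1 : ℝ) ≤ |(k : ℝ)| := by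
  rw [← Int.cast_abs]
  exact_mod_cast Int.one_le_abs hk

lemma div_abs_intCast_le {x : ℝ} (hx : 0 ≤ x) (k : ℤ) : x / |(k : ℝ)| ≤ x := by
  rcases eq_or_ne k 0 with rfl | hk
  · simpa using hx
  · exact div_le_self hx (one_le_abs_intCast hk)

noncomputable def multiplierRate (a t : ℝ) (k : ℤ) (ξ : ℝ) : ℝ :=
  lorentzian |(k : ℝ)|⁻¹ (ξ - k * t) + lorentzian a (ξ - k * t)

/-- `exp (-∫₀ᵗ multiplierRate a s k ξ ds)`, with `a` playing the role of `ν ^ (1/3)`. For `k = 0`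
both phases are divisions by `0`, hence `0`, so the multiplier is identically `1`. -/
noncomputable def multiplier (a t : ℝ) (k : ℤ) (ξ : ℝ) : ℝ :=
  exp (arctanPhase |(k : ℝ)|⁻¹ k ξ t + arctanPhase a k ξ t)

section Multiplier

variable {a t ξ : ℝ} {k : ℤ}

attribute [local fun_prop] ContDiff.arctan

lemma contDiff_multiplier_time {n : ℕ∞} : ContDiff ℝ n (fun s => multiplier a s k ξ) := by
  unfold multiplier arctanPhase; fun_prop

lemma contDiff_multiplier_freq {n : ℕ∞} : ContDiff ℝ n (fun z => multiplier a t k z) := by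
  unfold multiplier arctanPhase; fun_prop

lemma multiplier_pos : 0 < multiplier a t k ξ := exp_pos _

lemma multiplier_time_zero (a : ℝ) (k : ℤ) (ξ : ℝ) : multiplier a 0 k ξ = 1 := by
  simp [multiplier, arctanPhase]

lemma multiplier_freq_zero (a t ξ : ℝ) : multiplier a t 0 ξ = 1 := by
  simp [multiplier, arctanPhase]

lemma multiplier_le_one (ha : 0 ≤ a) (ht : 0 ≤ t) : multiplier a t k ξ ≤ 1 :=
  exp_le_one_iff.mpr (add_nonpos (arctanPhase_nonpos (by positivity) ht) (arctanPhase_nonpos ha ht))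

lemma exp_neg_two_pi_le_multiplier : exp (-(2 * π)) ≤ multiplier a t k ξ := by
  have h₁ := abs_le.mp ((abs_arctanPhase_le (b := |(k : ℝ)|⁻¹) (ξ := ξ) (t := t)).trans
    (div_abs_intCast_le pi_pos.le k))
  have h₂ := abs_le.mp ((abs_arctanPhase_le (b := a) (ξ := ξ) (t := t)).trans
    (div_abs_intCast_le pi_pos.le k))
  exact exp_le_exp.mpr (by linarith [h₁.1, h₂.1])

lemma multiplierRate_nonneg (ha : 0 ≤ a) : 0 ≤ multiplierRate a t k ξ :=
  add_nonneg (lorentzian_nonneg (by positivity) _) (lorentzian_nonneg ha _)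

lemma hasDerivAt_multiplier_time (hk : k ≠ 0) :
    HasDerivAt (fun s => multiplier a s k ξ) (-(multiplierRate a t k ξ * multiplier a t k ξ)) t := by
  have hk' : (k : ℝ) ≠ 0 := Int.cast_ne_zero.mpr hk
  refine ((hasDerivAt_arctanPhase_time hk').add (hasDerivAt_arctanPhase_time hk')).exp.congr_deriv ?_
  simp only [multiplierRate, multiplier, Pi.add_apply]
  ring

lemma deriv_multiplier_time_nonpos (ha : 0 ≤ a) : deriv (fun s => multiplier a s k ξ) t ≤ 0 := by
  rcases eq_or_ne k 0 with rfl | hk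
  · simp [multiplier_freq_zero]
  · rw [(hasDerivAt_multiplier_time hk).deriv]
    exact neg_nonpos.mpr (mul_nonneg (multiplierRate_nonneg ha) multiplier_pos.le)

lemma abs_div_le_neg_deriv_multiplier_div (ha : 0 ≤ a) (hk : k ≠ 0) :
    |(k : ℝ)| / ((k : ℝ) ^ 2 + (ξ - k * t) ^ 2)
      ≤ -deriv (fun s => multiplier a s k ξ) t / multiplier a t k ξ := by
  rw [(hasDerivAt_multiplier_time hk).deriv, neg_neg, mul_div_cancel_right₀ _ multiplier_pos.ne',
    multiplierRate, lorentzian_inv_abs (Int.cast_ne_zero.mpr hk)]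
  exact le_add_of_nonneg_right (lorentzian_nonneg ha _)

lemma sqrt_neg_deriv_mul_multiplier (ha : 0 ≤ a) (hk : k ≠ 0) :
    √(-deriv (fun s => multiplier a s k ξ) t * multiplier a t k ξ)
      = √(multiplierRate a t k ξ) * multiplier a t k ξ := by
  rw [(hasDerivAt_multiplier_time hk).deriv, neg_neg, mul_assoc, ← sq,
    sqrt_mul (multiplierRate_nonneg ha), sqrt_sq multiplier_pos.le]

lemma hasDerivAt_multiplier_freq :
    HasDerivAt (fun z => multiplier a t k z) (multiplier a t k ξ *
      ((lorentzian |(k : ℝ)|⁻¹ (ξ - k * t) - lorentzian |(k : ℝ)|⁻¹ ξ) / k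
        + (lorentzian a (ξ - k * t) - lorentzian a ξ) / k)) ξ :=
  (hasDerivAt_arctanPhase_freq.add hasDerivAt_arctanPhase_freq).exp

lemma abs_deriv_multiplier_freq_div_le (ha0 : 0 ≤ a) (ha1 : a ≤ 1) (hk : k ≠ 0) :
    |deriv (fun z => multiplier a t k z) ξ| / multiplier a t k ξ ≤ 2 / |(k : ℝ)| := by
  rw [hasDerivAt_multiplier_freq.deriv, abs_mul, abs_of_pos multiplier_pos,
    mul_div_cancel_left₀ _ multiplier_pos.ne']
  have hk1 : |(k : ℝ)|⁻¹ ≤ 1 := inv_le_one_of_one_le₀ (one_le_abs_intCast hk)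
  calc _ ≤ |lorentzian |(k : ℝ)|⁻¹ (ξ - k * t) - lorentzian |(k : ℝ)|⁻¹ ξ| / |(k : ℝ)|
        + |lorentzian a (ξ - k * t) - lorentzian a ξ| / |(k : ℝ)| := by
        rw [← abs_div, ← abs_div]; exact abs_add_le _ _
    _ ≤ 1 / |(k : ℝ)| + 1 / |(k : ℝ)| := by
        gcongr
        · exact (abs_lorentzian_sub_le (by positivity) _ _).trans hk1
        · exact (abs_lorentzian_sub_le ha0 _ _).trans ha1
    _ = 2 / |(k : ℝ)| := by ring

lemma one_le_sqrt_rate_mul_multiplier_add (ha : 0 < a) :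
    1 ≤ 2 * exp (2 * π) * (√a)⁻¹ * (√(multiplierRate a t k ξ) * multiplier a t k ξ
      + a * √a * √((k : ℝ) ^ 2 + (ξ - k * t) ^ 2)) := by
  have hsa : 0 < √a := sqrt_pos.mpr ha
  have hexp : exp (2 * π) * exp (-(2 * π)) = 1 := by rw [← exp_add]; simp
  suffices h : exp (-(2 * π)) * √a / 2 ≤ √(multiplierRate a t k ξ) * multiplier a t k ξ
      + a * √a * √((k : ℝ) ^ 2 + (ξ - k * t) ^ 2) by
    calc (1 : ℝ) = 2 * exp (2 * π) * (√a)⁻¹ * (exp (-(2 * π)) * √a / 2) := by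
          field_simp; linear_combination -hexp
      _ ≤ _ := by gcongr
  have hrest : 0 ≤ a * √a * √((k : ℝ) ^ 2 + (ξ - k * t) ^ 2) := by positivity
  by_cases hnear : |a * (ξ - k * t)| ≤ 1
  · -- near the critical time `t = ξ / k` the enhanced-dissipation rate alone is at least `a / 2`
    have hrate : a / 2 ≤ multiplierRate a t k ξ :=
      (half_le_lorentzian ha.le hnear).trans
        (le_add_of_nonneg_left (lorentzian_nonneg (by positivity) _))
    have hsqrt : √a / 2 ≤ √(multiplierRate a t k ξ) :=
      (le_sqrt (by positivity) (multiplierRate_nonneg ha.le)).mpr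
        (by rw [div_pow, sq_sqrt ha.le]; linarith)
    calc exp (-(2 * π)) * √a / 2 = √a / 2 * exp (-(2 * π)) := by ring
      _ ≤ √(multiplierRate a t k ξ) * multiplier a t k ξ :=
          mul_le_mul hsqrt exp_neg_two_pi_le_multiplier (exp_pos _).le (sqrt_nonneg _)
      _ ≤ _ := le_add_of_nonneg_right hrest
  · -- far from it, the second summand alone is at least `√a`
    have hfar : 1 ≤ a * √((k : ℝ) ^ 2 + (ξ - k * t) ^ 2) := by
      calc (1 : ℝ) ≤ |a * (ξ - k * t)| := (not_le.mp hnear).le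
        _ = a * |ξ - k * t| := by rw [abs_mul, abs_of_pos ha]
        _ ≤ _ := by gcongr; exact abs_le_sqrt (le_add_of_nonneg_left (sq_nonneg _))
    have hc : exp (-(2 * π)) ≤ 1 := exp_le_one_iff.mpr (by linarith [pi_pos])
    calc exp (-(2 * π)) * √a / 2 ≤ √a := by nlinarith
      _ ≤ √a * (a * √((k : ℝ) ^ 2 + (ξ - k * t) ^ 2)) := le_mul_of_one_le_right hsa.le hfar
      _ = a * √a * √((k : ℝ) ^ 2 + (ξ - k * t) ^ 2) := by ring
      _ ≤ _ := le_add_of_nonneg_left (mul_nonneg (sqrt_nonneg _) multiplier_pos.le)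

lemma sqrt_rate_mul_multiplier_le (ha0 : 0 ≤ a) (ha1 : a ≤ 1) (hk : k ≠ 0) (ht : 0 ≤ t)
    (ξ η : ℝ) :
    √(multiplierRate a t k ξ) * multiplier a t k ξ
      ≤ 2 * exp (2 * π) * √(1 + (ξ - η) ^ 2) * (√(multiplierRate a t k η) * multiplier a t k η) := by
  have hk1 : |(k : ℝ)|⁻¹ ≤ 1 := inv_le_one_of_one_le₀ (one_le_abs_intCast hk)
  have hrate : multiplierRate a t k ξ ≤ 2 * (1 + (ξ - η) ^ 2) * multiplierRate a t k η := by
    have h₁ := lorentzian_le_two_mul (by positivity) hk1 (ξ - k * t) (η - k * t)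
    have h₂ := lorentzian_le_two_mul ha0 ha1 (ξ - k * t) (η - k * t)
    rw [sub_sub_sub_cancel_right] at h₁ h₂
    rw [multiplierRate, multiplierRate]
    linarith
  have hM : 1 ≤ exp (2 * π) * multiplier a t k η := by
    calc (1 : ℝ) = exp (2 * π) * exp (-(2 * π)) := by rw [← exp_add]; simp
      _ ≤ _ := by gcongr; exact exp_neg_two_pi_le_multiplier
  have hsqrt2 : √2 ≤ 2 := sqrt_le_left zero_le_two |>.mpr (by norm_num)
  calc √(multiplierRate a t k ξ) * multiplier a t k ξ ≤ √(multiplierRate a t k ξ) :=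
        mul_le_of_le_one_right (sqrt_nonneg _) (multiplier_le_one ha0 ht)
    _ ≤ √(2 * (1 + (ξ - η) ^ 2) * multiplierRate a t k η) := sqrt_le_sqrt hrate
    _ = √2 * √(1 + (ξ - η) ^ 2) * √(multiplierRate a t k η) := by
        rw [sqrt_mul (by positivity), sqrt_mul zero_le_two]
    _ ≤ 2 * √(1 + (ξ - η) ^ 2) * √(multiplierRate a t k η) * (exp (2 * π) * multiplier a t k η) := by
        rw [← mul_one (√2 * _ * _)]
        gcongr
    _ = _ := by ring

end Multiplier

/-- **Lemma 2.2: existence of the Fourier multiplier `M`.**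
There are constants `c ∈ (0,1)` and `C > 0` such that for every `ν ∈ (0,1)` there is a
multiplier `M(t,k,ξ)`, `C¹` in `t` and in `ξ` and nonincreasing in `t`, satisfying
properties (i)–(vi) (for `t ≥ 0`). -/
theorem stmt3 :
    ∃ c C : ℝ, c ∈ Ioo (0 : ℝ) 1 ∧ 0 < C ∧
      ∀ ν ∈ Ioo (0 : ℝ) 1, ∃ M : ℝ → ℤ → ℝ → ℝ,
        -- C¹ in t and in ξ
        (∀ (k : ℤ) (ξ : ℝ), ContDiff ℝ 1 (fun t => M t k ξ)) ∧
        (∀ (t : ℝ) (k : ℤ), ContDiff ℝ 1 (fun ξ => M t k ξ)) ∧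
        -- ∂ₜ M ≤ 0
        (∀ t ≥ (0 : ℝ), ∀ (k : ℤ) (ξ : ℝ), deriv (fun s => M s k ξ) t ≤ 0) ∧
        -- (i) M(0,k,ξ) = 1 and M(t,0,ξ) = 1
        (∀ (k : ℤ) (ξ : ℝ), M 0 k ξ = 1) ∧
        (∀ t ≥ (0 : ℝ), ∀ ξ : ℝ, M t 0 ξ = 1) ∧
        -- (ii) c ≤ M ≤ 1
        (∀ t ≥ (0 : ℝ), ∀ (k : ℤ) (ξ : ℝ), M t k ξ ∈ Icc c 1) ∧
        -- (iii) −∂ₜM/M ≥ |k|/(k²+(ξ−kt)²) for k ≠ 0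
        (∀ t ≥ (0 : ℝ), ∀ k : ℤ, k ≠ 0 → ∀ ξ : ℝ,
          |(k : ℝ)| / ((k : ℝ) ^ 2 + (ξ - (k : ℝ) * t) ^ 2)
            ≤ -(deriv (fun s => M s k ξ) t) / M t k ξ) ∧
        -- (iv) |∂_ξ M|/M ≤ C/|k| for k ≠ 0
        (∀ t ≥ (0 : ℝ), ∀ k : ℤ, k ≠ 0 → ∀ ξ : ℝ,
          |deriv (fun z => M t k z) ξ| / M t k ξ ≤ C / |(k : ℝ)|) ∧
        -- (v) 1 ≤ C ν^{−1/6} (√(−∂ₜM·M) + ν^{1/2}(k²+(ξ−kt)²)^{1/2}) for k ≠ 0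
        (∀ t ≥ (0 : ℝ), ∀ k : ℤ, k ≠ 0 → ∀ ξ : ℝ,
          1 ≤ C * ν ^ (-(1 : ℝ) / 6) *
              (Real.sqrt (-(deriv (fun s => M s k ξ) t) * M t k ξ)
                + ν ^ ((1 : ℝ) / 2) * Real.sqrt ((k : ℝ) ^ 2 + (ξ - (k : ℝ) * t) ^ 2))) ∧
        -- (vi) √(−∂ₜM(t,k,ξ)M(t,k,ξ)) ≤ C ⟨ξ−η⟩ √(−∂ₜM(t,k,η)M(t,k,η)) for k ≠ 0
        (∀ t ≥ (0 : ℝ), ∀ k : ℤ, k ≠ 0 → ∀ ξ η : ℝ,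
          Real.sqrt (-(deriv (fun s => M s k ξ) t) * M t k ξ)
            ≤ C * Real.sqrt (1 + (ξ - η) ^ 2) *
                Real.sqrt (-(deriv (fun s => M s k η) t) * M t k η)) := by
  refine ⟨exp (-(2 * π)), 2 * exp (2 * π), ⟨exp_pos _, exp_lt_one_iff.mpr (by linarith [pi_pos])⟩,
    by positivity, fun ν ⟨hν0, hν1⟩ => ?_⟩
  set a := ν ^ ((1 : ℝ) / 3)
  have ha0 : 0 < a := rpow_pos_of_pos hν0 _
  have ha1 : a ≤ 1 := rpow_le_one hν0.le hν1.le (by norm_num)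
  have hsqrt : √a = ν ^ ((1 : ℝ) / 6) := by
    rw [sqrt_eq_rpow, ← rpow_mul hν0.le]; norm_num
  have hhalf : ν ^ ((1 : ℝ) / 2) = a * √a := by
    rw [hsqrt, ← rpow_add hν0]; norm_num
  have hsixth : ν ^ (-(1 : ℝ) / 6) = (√a)⁻¹ := by
    rw [hsqrt, ← rpow_neg hν0.le]; norm_num
  refine ⟨multiplier a, fun _ _ => contDiff_multiplier_time, fun _ _ => contDiff_multiplier_freq,
    fun _ _ _ _ => deriv_multiplier_time_nonpos ha0.le, multiplier_time_zero a,
    fun t _ => multiplier_freq_zero a t,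
    fun _ ht _ _ => ⟨exp_neg_two_pi_le_multiplier, multiplier_le_one ha0.le ht⟩,
    fun _ _ _ hk _ => abs_div_le_neg_deriv_multiplier_div ha0.le hk,
    fun _ _ _ hk _ => (abs_deriv_multiplier_freq_div_le ha0.le ha1 hk).trans
      (by gcongr; linarith [one_le_exp (by positivity : (0 : ℝ) ≤ 2 * π)]),
    fun _ _ _ hk _ => ?_, fun _ ht _ hk ξ η => ?_⟩
  · rw [sqrt_neg_deriv_mul_multiplier ha0.le hk, hhalf, hsixth]
    exact one_le_sqrt_rate_mul_multiplier_add ha0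
  · rw [sqrt_neg_deriv_mul_multiplier ha0.le hk, sqrt_neg_deriv_mul_multiplier ha0.le hk]
    exact sqrt_rate_mul_multiplier_le ha0.le ha1 hk ht ξ η
end

section
/- Derivation of the transformed Boussinesq system. Let ν, μ > 0, α ≥ 0, and let Ū : [0,T] × ℝ → ℝ be smooth with ∂_t Ū = ν ∂_{yy} Ū, ∂_y Ū > 0, and Ū(t,·) : ℝ → ℝ a bijection for each t. Let a, b be the smooth functions determined by a(t, Ū(t,y)) = ∂_y Ū(t,y) and b(t, Ū(t,y)) = ∂_{yy} Ū(t,y). Let (ω̃, θ̃, ψ̃) be a smooth solution on (0,T) × 𝕋 × ℝ of: ∂_t ω̃ + Ū ∂_x ω̃ − (∂_{yy}Ū) ∂_x ψ̃ + ũ·∇ω̃ − νΔω̃ = ∂_x θ̃ and ∂_t θ̃ + Ū ∂_x θ̃ + α ũ² + ũ·∇θ̃ − μΔθ̃ = 0, where ũ = (−∂_yψ̃, ∂_xψ̃)ᵀ and ω̃ = Δψ̃. Define ω, θ, ψ on [0,T] × 𝕋 × ℝ by ω(t, x − tŪ(t,y), Ū(t,y)) = ω̃(t,x,y), and similarly for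 θ and ψ, and set u = ∇_t^⊥ψ = (−a∂_Y^Lψ, ∂_Xψ)ᵀ. Then (ω, θ, ψ, u) satisfies pointwise on (0,T) × 𝕋 × ℝ: ∂_tω + u·∇_tω = b∂_Xψ + νΔ̃_tω + ∂_Xθ; ∂_tθ + u·∇_tθ = μΔ̃_tθ + (μ−ν)b∂_Y^Lθ − α u^Y; and ω = Δ_tψ. -/
noncomputable section

/-- Partial derivative in the first (time) variable. -/
def pt (f : ℝ → ℝ → ℝ → ℝ) : ℝ → ℝ → ℝ → ℝ := fun t x y => deriv (fun s => f s x y) t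

/-- Partial derivative in the second variable. -/
def px (f : ℝ → ℝ → ℝ → ℝ) : ℝ → ℝ → ℝ → ℝ := fun t x y => deriv (fun x' => f t x' y) x

/-- Partial derivative in the third variable. -/
def py (f : ℝ → ℝ → ℝ → ℝ) : ℝ → ℝ → ℝ → ℝ := fun t x y => deriv (fun y' => f t x y') y

/-- The adapted vertical derivative `∂_Y^L = ∂_Y − t∂_X` in the sheared coordinates. -/
def pYL (f : ℝ → ℝ → ℝ → ℝ) : ℝ → ℝ → ℝ → ℝ := fun t X Y => py f t X Y - t * px f t X Y

namespace BoussAux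

def U3 (f : ℝ → ℝ → ℝ → ℝ) : ℝ × ℝ × ℝ → ℝ := fun q => f q.1 q.2.1 q.2.2

theorem contDiff_deriv1 {g : ℝ → ℝ} (hg : ContDiff ℝ (⊤ : ℕ∞) g) : ContDiff ℝ (⊤ : ℕ∞) (deriv g) := by
  have h : deriv g = fun z => fderiv ℝ g z 1 := by
    funext z; exact (fderiv_apply_one_eq_deriv).symm
  rw [h]
  exact (hg.fderiv_right (by simp)).clm_apply contDiff_const

theorem pt_eq_fderiv {f : ℝ → ℝ → ℝ → ℝ} (hf : ContDiff ℝ (⊤ : ℕ∞) (U3 f)) (t x y : ℝ) :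
    pt f t x y = fderiv ℝ (U3 f) (t, x, y) (1, 0, 0) := by
  have hγ : HasDerivAt (fun s : ℝ => ((s, x, y) : ℝ × ℝ × ℝ)) (1, 0, 0) t :=
    (hasDerivAt_id t).prodMk (hasDerivAt_const t (x, y))
  have hF : HasFDerivAt (U3 f) (fderiv ℝ (U3 f) (t, x, y)) (t, x, y) :=
    ((hf.differentiable (by simp)) (t, x, y)).hasFDerivAt
  exact (hF.comp_hasDerivAt t hγ).deriv

theorem px_eq_fderiv {f : ℝ → ℝ → ℝ → ℝ} (hf : ContDiff ℝ (⊤ : ℕ∞) (U3 f)) (t x y : ℝ) :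
    px f t x y = fderiv ℝ (U3 f) (t, x, y) (0, 1, 0) := by
  have hγ : HasDerivAt (fun x' : ℝ => ((t, x', y) : ℝ × ℝ × ℝ)) (0, 1, 0) x :=
    (hasDerivAt_const x t).prodMk ((hasDerivAt_id x).prodMk (hasDerivAt_const x y))
  have hF : HasFDerivAt (U3 f) (fderiv ℝ (U3 f) (t, x, y)) (t, x, y) :=
    ((hf.differentiable (by simp)) (t, x, y)).hasFDerivAt
  exact (hF.comp_hasDerivAt x hγ).deriv

theorem py_eq_fderiv {f : ℝ → ℝ → ℝ → ℝ} (hf : ContDiff ℝ (⊤ : ℕ∞) (U3 f)) (t x y : ℝ) :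
    py f t x y = fderiv ℝ (U3 f) (t, x, y) (0, 0, 1) := by
  have hγ : HasDerivAt (fun y' : ℝ => ((t, x, y') : ℝ × ℝ × ℝ)) (0, 0, 1) y :=
    (hasDerivAt_const y t).prodMk ((hasDerivAt_const y x).prodMk (hasDerivAt_id y))
  have hF : HasFDerivAt (U3 f) (fderiv ℝ (U3 f) (t, x, y)) (t, x, y) :=
    ((hf.differentiable (by simp)) (t, x, y)).hasFDerivAt
  exact (hF.comp_hasDerivAt y hγ).deriv

theorem chain3 {f : ℝ → ℝ → ℝ → ℝ} (hf : ContDiff ℝ (⊤ : ℕ∞) (U3 f)) {c1 c2 c3 : ℝ → ℝ}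
    {v1 v2 v3 s : ℝ} (h1 : HasDerivAt c1 v1 s) (h2 : HasDerivAt c2 v2 s)
    (h3 : HasDerivAt c3 v3 s) :
    HasDerivAt (fun u => f (c1 u) (c2 u) (c3 u))
      (v1 * pt f (c1 s) (c2 s) (c3 s) + v2 * px f (c1 s) (c2 s) (c3 s)
        + v3 * py f (c1 s) (c2 s) (c3 s)) s := by
  have hF : HasFDerivAt (U3 f) (fderiv ℝ (U3 f) (c1 s, c2 s, c3 s)) (c1 s, c2 s, c3 s) :=
    ((hf.differentiable (by simp)) (c1 s, c2 s, c3 s)).hasFDerivAt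
  have hγ : HasDerivAt (fun u => ((c1 u, c2 u, c3 u) : ℝ × ℝ × ℝ)) (v1, v2, v3) s :=
    h1.prodMk (h2.prodMk h3)
  have h := hF.comp_hasDerivAt s hγ
  have hval : fderiv ℝ (U3 f) (c1 s, c2 s, c3 s) (v1, v2, v3)
      = v1 * pt f (c1 s) (c2 s) (c3 s) + v2 * px f (c1 s) (c2 s) (c3 s)
        + v3 * py f (c1 s) (c2 s) (c3 s) := by
    have hv : ((v1, v2, v3) : ℝ × ℝ × ℝ)
        = v1 • ((1:ℝ), (0:ℝ), (0:ℝ)) + v2 • ((0:ℝ), (1:ℝ), (0:ℝ))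
          + v3 • ((0:ℝ), (0:ℝ), (1:ℝ)) := by
      simp [Prod.ext_iff]
    rw [hv, map_add, map_add, map_smul, map_smul, map_smul,
      ← pt_eq_fderiv hf, ← px_eq_fderiv hf, ← py_eq_fderiv hf]
    simp [smul_eq_mul]
  exact hval ▸ h

theorem contDiff_pt {f : ℝ → ℝ → ℝ → ℝ} (hf : ContDiff ℝ (⊤ : ℕ∞) (U3 f)) :
    ContDiff ℝ (⊤ : ℕ∞) (U3 (pt f)) := by
  have h : U3 (pt f) = fun q : ℝ × ℝ × ℝ => fderiv ℝ (U3 f) q (1, 0, 0) := by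
    funext q; exact pt_eq_fderiv hf q.1 q.2.1 q.2.2
  rw [h]
  exact (hf.fderiv_right (by simp)).clm_apply contDiff_const

theorem contDiff_px {f : ℝ → ℝ → ℝ → ℝ} (hf : ContDiff ℝ (⊤ : ℕ∞) (U3 f)) :
    ContDiff ℝ (⊤ : ℕ∞) (U3 (px f)) := by
  have h : U3 (px f) = fun q : ℝ × ℝ × ℝ => fderiv ℝ (U3 f) q (0, 1, 0) := by
    funext q; exact px_eq_fderiv hf q.1 q.2.1 q.2.2
  rw [h]
  exact (hf.fderiv_right (by simp)).clm_apply contDiff_const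

theorem contDiff_py {f : ℝ → ℝ → ℝ → ℝ} (hf : ContDiff ℝ (⊤ : ℕ∞) (U3 f)) :
    ContDiff ℝ (⊤ : ℕ∞) (U3 (py f)) := by
  have h : U3 (py f) = fun q : ℝ × ℝ × ℝ => fderiv ℝ (U3 f) q (0, 0, 1) := by
    funext q; exact py_eq_fderiv hf q.1 q.2.1 q.2.2
  rw [h]
  exact (hf.fderiv_right (by simp)).clm_apply contDiff_const

theorem contDiff_pYL {f : ℝ → ℝ → ℝ → ℝ} (hf : ContDiff ℝ (⊤ : ℕ∞) (U3 f)) :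
    ContDiff ℝ (⊤ : ℕ∞) (U3 (pYL f)) := by
  have h : U3 (pYL f) = fun q : ℝ × ℝ × ℝ => U3 (py f) q - q.1 * U3 (px f) q := rfl
  rw [h]
  exact (contDiff_py hf).sub (contDiff_fst.mul (contDiff_px hf))


theorem key (T : ℝ) (Ub : ℝ → ℝ → ℝ)
    (hUb : ContDiff ℝ (⊤ : ℕ∞) (fun p : ℝ × ℝ => Ub p.1 p.2))
    (f ft : ℝ → ℝ → ℝ → ℝ) (hf : ContDiff ℝ (⊤ : ℕ∞) (U3 f))
    (htr : ∀ s ∈ Set.Ioo (0:ℝ) T, ∀ x y : ℝ, f s (x - s * Ub s y) (Ub s y) = ft s x y)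
    (t : ℝ) (ht : t ∈ Set.Ioo (0:ℝ) T) (x y : ℝ) :
    px ft t x y = px f t (x - t * Ub t y) (Ub t y) ∧
    py ft t x y = deriv (fun z => Ub t z) y * pYL f t (x - t * Ub t y) (Ub t y) ∧
    pt ft t x y = pt f t (x - t * Ub t y) (Ub t y)
        - Ub t y * px f t (x - t * Ub t y) (Ub t y)
        + deriv (fun s => Ub s y) t * pYL f t (x - t * Ub t y) (Ub t y) ∧
    px (px ft) t x y = px (px f) t (x - t * Ub t y) (Ub t y) ∧
    py (py ft) t x y
      = deriv (deriv (fun z => Ub t z)) y * pYL f t (x - t * Ub t y) (Ub t y)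
        + (deriv (fun z => Ub t z) y) ^ 2 * pYL (pYL f) t (x - t * Ub t y) (Ub t y) := by
  have hUy : ∀ s : ℝ, ContDiff ℝ (⊤ : ℕ∞) (fun z => Ub s z) := fun s =>
    hUb.comp (contDiff_const.prodMk contDiff_id)
  have hUyd : ∀ s z : ℝ, HasDerivAt (fun z' => Ub s z') (deriv (fun z' => Ub s z') z) z :=
    fun s z => (((hUy s).differentiable (by simp)) z).hasDerivAt
  have hUyyd : ∀ z : ℝ, HasDerivAt (deriv (fun z' => Ub t z'))
      (deriv (deriv fun z' => Ub t z') z) z := fun z =>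
    (((contDiff_deriv1 (hUy t)).differentiable (by simp)) z).hasDerivAt
  have hUt : HasDerivAt (fun s => Ub s y) (deriv (fun s => Ub s y) t) t :=
    (((hUb.comp (contDiff_id.prodMk contDiff_const)).differentiable (by simp)) t).hasDerivAt
  -- (1) px
  have e1 : ∀ x y : ℝ, px ft t x y = px f t (x - t * Ub t y) (Ub t y) := by
    intro x y
    have hfe : (fun x' => ft t x' y) = fun x' => f t (x' - t * Ub t y) (Ub t y) := by
      funext x'; exact (htr t ht x' y).symm
    have hd := chain3 hf (hasDerivAt_const x t)
      ((hasDerivAt_id x).sub_const (t * Ub t y)) (hasDerivAt_const x (Ub t y))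
    simp only [id_eq] at hd
    calc px ft t x y = deriv (fun x' => f t (x' - t * Ub t y) (Ub t y)) x := by
          show deriv (fun x' => ft t x' y) x = _; rw [hfe]
      _ = _ := hd.deriv
      _ = px f t (x - t * Ub t y) (Ub t y) := by ring
  -- (2) py
  have e2 : ∀ x y : ℝ,
      py ft t x y = deriv (fun z => Ub t z) y * pYL f t (x - t * Ub t y) (Ub t y) := by
    intro x y
    have hfe : (fun y' => ft t x y') = fun y' => f t (x - t * Ub t y') (Ub t y') := by
      funext y'; exact (htr t ht x y').symm
    have hc2 : HasDerivAt (fun y' => x - t * Ub t y')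
        (-(t * deriv (fun z' => Ub t z') y)) y := ((hUyd t y).const_mul t).const_sub x
    have hd := chain3 hf (hasDerivAt_const y t) hc2 (hUyd t y)
    calc py ft t x y = deriv (fun y' => f t (x - t * Ub t y') (Ub t y')) y := by
          show deriv (fun y' => ft t x y') y = _; rw [hfe]
      _ = _ := hd.deriv
      _ = _ := by simp only [pYL]; ring
  -- (3) pt
  have e3 : pt ft t x y = pt f t (x - t * Ub t y) (Ub t y)
      - Ub t y * px f t (x - t * Ub t y) (Ub t y)
      + deriv (fun s => Ub s y) t * pYL f t (x - t * Ub t y) (Ub t y) := by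
    have hev : (fun s => ft s x y) =ᶠ[nhds t] fun s => f s (x - s * Ub s y) (Ub s y) := by
      filter_upwards [Ioo_mem_nhds ht.1 ht.2] with s hs
      exact (htr s hs x y).symm
    have hc2 : HasDerivAt (fun s => x - s * Ub s y)
        (-(1 * Ub t y + t * deriv (fun s => Ub s y) t)) t :=
      ((hasDerivAt_id' (x := t)).mul hUt).const_sub x
    have hd := chain3 hf (hasDerivAt_id' (x := t)) hc2 hUt
    calc pt ft t x y = deriv (fun s => f s (x - s * Ub s y) (Ub s y)) t := hev.deriv_eq
      _ = _ := hd.deriv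
      _ = _ := by simp only [pYL]; ring
  -- (4) pxpx
  have e4 : px (px ft) t x y = px (px f) t (x - t * Ub t y) (Ub t y) := by
    have hfe : (fun x' => px ft t x' y) = fun x' => px f t (x' - t * Ub t y) (Ub t y) := by
      funext x'; exact e1 x' y
    have hd := chain3 (contDiff_px hf) (hasDerivAt_const x t)
      ((hasDerivAt_id x).sub_const (t * Ub t y)) (hasDerivAt_const x (Ub t y))
    simp only [id_eq] at hd
    calc px (px ft) t x y = deriv (fun x' => px f t (x' - t * Ub t y) (Ub t y)) x := by
          show deriv (fun x' => px ft t x' y) x = _; rw [hfe]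
      _ = _ := hd.deriv
      _ = px (px f) t (x - t * Ub t y) (Ub t y) := by ring
  -- (5) pypy
  have e5 : py (py ft) t x y
      = deriv (deriv (fun z => Ub t z)) y * pYL f t (x - t * Ub t y) (Ub t y)
        + (deriv (fun z => Ub t z) y) ^ 2 * pYL (pYL f) t (x - t * Ub t y) (Ub t y) := by
    have hfe : (fun y' => py ft t x y')
        = fun y' => deriv (fun z' => Ub t z') y' * pYL f t (x - t * Ub t y') (Ub t y') := by
      funext y'; exact e2 x y'
    have hc2 : HasDerivAt (fun y' => x - t * Ub t y')
        (-(t * deriv (fun z' => Ub t z') y)) y := ((hUyd t y).const_mul t).const_sub x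
    have hchain := chain3 (contDiff_pYL hf) (hasDerivAt_const y t) hc2 (hUyd t y)
    have hd := (hUyyd y).mul hchain
    calc py (py ft) t x y
        = deriv (fun y' => deriv (fun z' => Ub t z') y'
            * pYL f t (x - t * Ub t y') (Ub t y')) y := by
          show deriv (fun y' => py ft t x y') y = _; rw [hfe]
      _ = _ := hd.deriv
      _ = _ := by simp only [pYL]; ring
  exact ⟨e1 x y, e2 x y, e3, e4, e5⟩


end BoussAux

/-- **Derivation of the transformed Boussinesq system.** If `(ω̃,θ̃,ψ̃)` solves the
vorticity form of the perturbation system and `ω,θ,ψ` are its expressions in the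
sheared coordinates `X = x − tŪ(t,y)`, `Y = Ū(t,y)`, then `(ω,θ,ψ,u)` with
`u = ∇_t^⊥ψ` solves `∂_tω + u·∇_tω = b∂_Xψ + νΔ̃_tω + ∂_Xθ`,
`∂_tθ + u·∇_tθ = μΔ̃_tθ + (μ−ν)b∂_Y^Lθ − αu^Y`, `ω = Δ_tψ`. -/
theorem stmt9 (ν μ α T : ℝ) (hν : 0 < ν) (hμ : 0 < μ) (hα : 0 ≤ α) (hT : 0 < T)
    (Ub : ℝ → ℝ → ℝ)
    (hUb : ContDiff ℝ (⊤ : ℕ∞) (fun p : ℝ × ℝ => Ub p.1 p.2))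
    (hheat : ∀ t y : ℝ, deriv (fun s => Ub s y) t = ν * deriv (deriv (fun z => Ub t z)) y)
    (hUb' : ∀ t y : ℝ, 0 < deriv (fun z => Ub t z) y)
    (hUbbij : ∀ t : ℝ, Function.Bijective fun y => Ub t y)
    (a b : ℝ → ℝ → ℝ)
    (ha : ContDiff ℝ (⊤ : ℕ∞) (fun p : ℝ × ℝ => a p.1 p.2))
    (hb : ContDiff ℝ (⊤ : ℕ∞) (fun p : ℝ × ℝ => b p.1 p.2))
    (haU : ∀ t y : ℝ, a t (Ub t y) = deriv (fun z => Ub t z) y)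
    (hbU : ∀ t y : ℝ, b t (Ub t y) = deriv (deriv (fun z => Ub t z)) y)
    (ωt θt ψt : ℝ → ℝ → ℝ → ℝ)
    (hωt : ContDiff ℝ (⊤ : ℕ∞) (fun q : ℝ × ℝ × ℝ => ωt q.1 q.2.1 q.2.2))
    (hθt : ContDiff ℝ (⊤ : ℕ∞) (fun q : ℝ × ℝ × ℝ => θt q.1 q.2.1 q.2.2))
    (hψt : ContDiff ℝ (⊤ : ℕ∞) (fun q : ℝ × ℝ × ℝ => ψt q.1 q.2.1 q.2.2))
    -- the vorticity form of the perturbation system, with `ũ = (−∂_yψ̃, ∂_xψ̃)`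
    (hvort : ∀ t ∈ Set.Ioo (0 : ℝ) T, ∀ x y : ℝ,
      pt ωt t x y + Ub t y * px ωt t x y
          - deriv (deriv (fun z => Ub t z)) y * px ψt t x y
          + ((-py ψt t x y) * px ωt t x y + px ψt t x y * py ωt t x y)
          - ν * (px (px ωt) t x y + py (py ωt) t x y)
        = px θt t x y)
    (htemp : ∀ t ∈ Set.Ioo (0 : ℝ) T, ∀ x y : ℝ,
      pt θt t x y + Ub t y * px θt t x y + α * px ψt t x y
          + ((-py ψt t x y) * px θt t x y + px ψt t x y * py θt t x y)
          - μ * (px (px θt) t x y + py (py θt) t x y)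
        = 0)
    (hωψ : ∀ t ∈ Set.Ioo (0 : ℝ) T, ∀ x y : ℝ,
      ωt t x y = px (px ψt) t x y + py (py ψt) t x y)
    -- the unknowns in the sheared coordinates
    (ω θ ψ : ℝ → ℝ → ℝ → ℝ)
    (hω : ContDiff ℝ (⊤ : ℕ∞) (fun q : ℝ × ℝ × ℝ => ω q.1 q.2.1 q.2.2))
    (hθ : ContDiff ℝ (⊤ : ℕ∞) (fun q : ℝ × ℝ × ℝ => θ q.1 q.2.1 q.2.2))
    (hψ : ContDiff ℝ (⊤ : ℕ∞) (fun q : ℝ × ℝ × ℝ => ψ q.1 q.2.1 q.2.2))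
    (hωtr : ∀ t ∈ Set.Ioo (0 : ℝ) T, ∀ x y : ℝ,
      ω t (x - t * Ub t y) (Ub t y) = ωt t x y)
    (hθtr : ∀ t ∈ Set.Ioo (0 : ℝ) T, ∀ x y : ℝ,
      θ t (x - t * Ub t y) (Ub t y) = θt t x y)
    (hψtr : ∀ t ∈ Set.Ioo (0 : ℝ) T, ∀ x y : ℝ,
      ψ t (x - t * Ub t y) (Ub t y) = ψt t x y)
    -- the transformed velocity `u = ∇_t^⊥ψ = (−a∂_Y^Lψ, ∂_Xψ)`
    (uX uY : ℝ → ℝ → ℝ → ℝ)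
    (huX : uX = fun t X Y => -(a t Y * pYL ψ t X Y))
    (huY : uY = fun t X Y => px ψ t X Y) :
    ∀ t ∈ Set.Ioo (0 : ℝ) T, ∀ X Y : ℝ,
      -- vorticity equation in the new coordinates
      (pt ω t X Y + (uX t X Y * px ω t X Y + uY t X Y * (a t Y * pYL ω t X Y))
          = b t Y * px ψ t X Y
            + ν * (px (px ω) t X Y + pYL (pYL ω) t X Y
                + (a t Y ^ 2 - 1) * pYL (pYL ω) t X Y)
            + px θ t X Y) ∧
      -- temperature equation in the new coordinated
      (pt θ t X Y + (uX t X Y * px θ t X Y + uY t X Y * (a t Y * pYL θ t X Y))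
          = μ * (px (px θ) t X Y + pYL (pYL θ) t X Y
                + (a t Y ^ 2 - 1) * pYL (pYL θ) t X Y)
            + (μ - ν) * (b t Y * pYL θ t X Y) - α * uY t X Y) ∧
      -- elliptic relation `ω = Δ_tψ`
      (ω t X Y = px (px ψ) t X Y + a t Y ^ 2 * pYL (pYL ψ) t X Y
          + b t Y * pYL ψ t X Y) := by
  intro t ht X Y
  obtain ⟨y, hy0⟩ := (hUbbij t).2 Y
  have hy : Ub t y = Y := hy0
  have Kω := BoussAux.key T Ub hUb ω ωt hω hωtr t ht (X + t * Y) y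
  have Kθ := BoussAux.key T Ub hUb θ θt hθ hθtr t ht (X + t * Y) y
  have Kψ := BoussAux.key T Ub hUb ψ ψt hψ hψtr t ht (X + t * Y) y
  have hv := hvort t ht (X + t * Y) y
  have hte := htemp t ht (X + t * Y) y
  have hell := hωψ t ht (X + t * Y) y
  have hωX := hωtr t ht (X + t * Y) y
  have hA : deriv (fun z => Ub t z) y = a t Y := by rw [← hy]; exact (haU t y).symm
  have hB : deriv (deriv (fun z => Ub t z)) y = b t Y := by rw [← hy]; exact (hbU t y).symm
  have hht := hheat t y
  rw [hB] at hht
  rw [hy, show X + t * Y - t * Y = X from by ring, hht, hA, hB] at Kω Kθ Kψ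
  rw [hB] at hv
  rw [hy, show X + t * Y - t * Y = X from by ring] at hωX
  obtain ⟨o1, o2, o3, o4, o5⟩ := Kω
  obtain ⟨q1, q2, q3, q4, q5⟩ := Kθ
  obtain ⟨p1, p2, p3, p4, p5⟩ := Kψ
  rw [o1, o2, o3, o4, o5, p1, p2, q1] at hv
  rw [q1, q2, q3, q4, q5, p1, p2] at hte
  rw [p4, p5] at hell
  simp only [huX, huY]
  refine ⟨?_, ?_, ?_⟩
  · linear_combination hv - px ω t X Y * hy
  · linear_combination hte - px θ t X Y * hy
  · rw [hωX]; linear_combination hell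
end
end

section
/- Commutator bound for the multiplier A = M⟨D⟩^N. Let N ≥ 1 be real and C₀ > 0, and let M : ℤ × ℝ → (0,1] be C¹ in its second argument with |∂_ξ M(k,ξ)| ≤ C₀/|k| for all integers k ≠ 0 and all ξ ∈ ℝ. Define A(k,ξ) = M(k,ξ)(1 + k² + ξ²)^{N/2}. Then there exists C = C(N, C₀) such that for all k ≠ 0 and all ξ, η ∈ ℝ: |k| · |A(k,ξ) − A(k, ξ−η)| ≤ C ( (1 + k² + (ξ−η)²)^{N/2} + (1 + k² + ξ²)^{N/2} ) |η|. -/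
open Set

/-! The weight `A = M ⟨(k, ξ)⟩^N` is differentiable in `ξ`, and by the product rule `|k| |∂_ξ A|` is
bounded by `C₀ ⟨(k, ξ)⟩^N` (from `|k| |∂_ξ M| ≤ C₀`) plus `|N| M ⟨(k, ξ)⟩^(N-2) |k| |ξ| ≤ |N| ⟨(k, ξ)⟩^N`
(from `M ≤ 1` and `|k| |ξ| ≤ ⟨(k, ξ)⟩^2`). For `N ≥ 0` the bracket is monotone in `|ξ|`, so on the
segment between `ξ - η` and `ξ` it is bounded by the sum of its endpoint values, and the mean value
theorem concludes. -/

/-- `⟨(k, ζ)⟩ ^ N`, with the Japanese bracket `⟨(k, ζ)⟩ = (1 + k² + ζ²)^(1/2)`. -/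
noncomputable def bracketRpow (N k ζ : ℝ) : ℝ := (1 + k ^ 2 + ζ ^ 2) ^ (N / 2)

section bracketRpow

variable {N k : ℝ}

lemma bracketRpow_pos (N k ζ : ℝ) : 0 < bracketRpow N k ζ := by
  unfold bracketRpow; positivity

lemma hasDerivAt_bracketRpow (N k ζ : ℝ) :
    HasDerivAt (bracketRpow N k) (N * ζ * (1 + k ^ 2 + ζ ^ 2) ^ (N / 2 - 1)) ζ := by
  have hbase : HasDerivAt (fun ζ : ℝ => 1 + k ^ 2 + ζ ^ 2) (2 * ζ) ζ := by
    simpa using (hasDerivAt_pow 2 ζ).const_add (1 + k ^ 2)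
  exact ((Real.hasDerivAt_rpow_const (p := N / 2) (Or.inl (by positivity))).comp ζ
    hbase).congr_deriv (by ring)

lemma abs_mul_le_one_add_sq_add_sq (k ζ : ℝ) : |k| * |ζ| ≤ 1 + k ^ 2 + ζ ^ 2 := by
  nlinarith [sq_nonneg (|k| - |ζ|), sq_abs k, sq_abs ζ]

lemma abs_mul_abs_deriv_bracketRpow_le (N k ζ : ℝ) :
    |k| * |N * ζ * (1 + k ^ 2 + ζ ^ 2) ^ (N / 2 - 1)| ≤ |N| * bracketRpow N k ζ := by
  have hpos : 0 < 1 + k ^ 2 + ζ ^ 2 := by positivity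
  have hsplit : bracketRpow N k ζ = (1 + k ^ 2 + ζ ^ 2) ^ (N / 2 - 1) * (1 + k ^ 2 + ζ ^ 2) := by
    rw [bracketRpow, ← Real.rpow_add_one hpos.ne', sub_add_cancel]
  rw [abs_mul, abs_mul, abs_of_pos (Real.rpow_pos_of_pos hpos _), hsplit]
  calc |k| * (|N| * |ζ| * (1 + k ^ 2 + ζ ^ 2) ^ (N / 2 - 1))
      = |N| * (1 + k ^ 2 + ζ ^ 2) ^ (N / 2 - 1) * (|k| * |ζ|) := by ring
    _ ≤ |N| * (1 + k ^ 2 + ζ ^ 2) ^ (N / 2 - 1) * (1 + k ^ 2 + ζ ^ 2) := by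
      gcongr
      exact abs_mul_le_one_add_sq_add_sq k ζ
    _ = |N| * ((1 + k ^ 2 + ζ ^ 2) ^ (N / 2 - 1) * (1 + k ^ 2 + ζ ^ 2)) := by ring

lemma bracketRpow_le_of_abs_le (hN : 0 ≤ N) {ζ ζ' : ℝ} (h : |ζ| ≤ |ζ'|) :
    bracketRpow N k ζ ≤ bracketRpow N k ζ' := by
  have hsq : ζ ^ 2 ≤ ζ' ^ 2 := sq_le_sq.mpr h
  exact Real.rpow_le_rpow (by positivity) (by linarith) (by linarith)

lemma bracketRpow_le_add_of_mem_uIcc (hN : 0 ≤ N) {a b ζ : ℝ} (hζ : ζ ∈ uIcc a b) :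
    bracketRpow N k ζ ≤ bracketRpow N k a + bracketRpow N k b := by
  have habs : |ζ| ≤ max |a| |b| := by
    rcases le_total a b with hab | hab
    · rw [uIcc_of_le hab] at hζ
      exact abs_le_max_abs_abs hζ.1 hζ.2
    · rw [uIcc_of_ge hab] at hζ
      exact (abs_le_max_abs_abs hζ.1 hζ.2).trans_eq (max_comm _ _)
  rcases le_max_iff.mp habs with h | h
  · linarith [bracketRpow_le_of_abs_le (k := k) hN h, bracketRpow_pos N k b]
  · linarith [bracketRpow_le_of_abs_le (k := k) hN h, bracketRpow_pos N k a]

end bracketRpow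

section multiplier

variable {N k C₀ : ℝ} {m : ℝ → ℝ}

lemma abs_mul_abs_deriv_mul_bracketRpow_le (hm : ∀ ζ, m ζ ∈ Icc 0 1)
    (hm' : ∀ ζ, |deriv m ζ| * |k| ≤ C₀) (ζ : ℝ) :
    |k| * |deriv m ζ * bracketRpow N k ζ + m ζ * (N * ζ * (1 + k ^ 2 + ζ ^ 2) ^ (N / 2 - 1))|
      ≤ (C₀ + |N|) * bracketRpow N k ζ := by
  have hW := bracketRpow_pos N k ζ
  have hderiv := abs_mul_abs_deriv_bracketRpow_le N k ζ
  obtain ⟨hm0, hm1⟩ := hm ζ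
  calc _ ≤ |k| * (|deriv m ζ| * bracketRpow N k ζ
        + m ζ * |N * ζ * (1 + k ^ 2 + ζ ^ 2) ^ (N / 2 - 1)|) := by
        gcongr
        refine (abs_add_le _ _).trans_eq ?_
        rw [abs_mul, abs_mul, abs_of_pos hW, abs_of_nonneg hm0]
    _ = |deriv m ζ| * |k| * bracketRpow N k ζ
        + m ζ * (|k| * |N * ζ * (1 + k ^ 2 + ζ ^ 2) ^ (N / 2 - 1)|) := by ring
    _ ≤ C₀ * bracketRpow N k ζ + 1 * (|N| * bracketRpow N k ζ) := by
        gcongr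
        exact hm' ζ
    _ = (C₀ + |N|) * bracketRpow N k ζ := by ring

theorem abs_mul_abs_mul_bracketRpow_sub_le (hN : 0 ≤ N) (hmd : Differentiable ℝ m)
    (hm : ∀ ζ, m ζ ∈ Icc 0 1) (hm' : ∀ ζ, |deriv m ζ| * |k| ≤ C₀) (a b : ℝ) :
    |k| * |m b * bracketRpow N k b - m a * bracketRpow N k a|
      ≤ (C₀ + |N|) * (bracketRpow N k a + bracketRpow N k b) * |b - a| := by
  have hder : ∀ ζ, HasDerivAt (fun ζ => |k| * (m ζ * bracketRpow N k ζ))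
      (|k| * (deriv m ζ * bracketRpow N k ζ
        + m ζ * (N * ζ * (1 + k ^ 2 + ζ ^ 2) ^ (N / 2 - 1)))) ζ := fun ζ =>
    (((hmd ζ).hasDerivAt.mul (hasDerivAt_bracketRpow N k ζ))).const_mul |k|
  have hbound : ∀ ζ ∈ uIcc a b,
      ‖|k| * (deriv m ζ * bracketRpow N k ζ
        + m ζ * (N * ζ * (1 + k ^ 2 + ζ ^ 2) ^ (N / 2 - 1)))‖
        ≤ (C₀ + |N|) * (bracketRpow N k a + bracketRpow N k b) := by
    intro ζ hζ
    have hC : 0 ≤ C₀ + |N| :=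
      add_nonneg ((mul_nonneg (abs_nonneg _) (abs_nonneg _)).trans (hm' ζ)) (abs_nonneg N)
    rw [Real.norm_eq_abs, abs_mul, abs_abs]
    exact (abs_mul_abs_deriv_mul_bracketRpow_le hm hm' ζ).trans
      (mul_le_mul_of_nonneg_left (bracketRpow_le_add_of_mem_uIcc hN hζ) hC)
  have hmvt := (convex_uIcc a b).norm_image_sub_le_of_norm_hasDerivWithin_le
    (fun ζ _ => (hder ζ).hasDerivWithinAt) hbound left_mem_uIcc right_mem_uIcc
  rwa [Real.norm_eq_abs, Real.norm_eq_abs, ← mul_sub, abs_mul, abs_abs] at hmvt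

end multiplier

/-- **Commutator bound for the multiplier `A = M⟨D⟩^N`.**
If `M : ℤ × ℝ → (0,1]` is `C¹` in `ξ` with `|∂_ξ M(k,ξ)| ≤ C₀/|k|` for `k ≠ 0`, and
`A(k,ξ) = M(k,ξ)(1+k²+ξ²)^(N/2)`, then there is `C = C(N,C₀)` with
`|k| |A(k,ξ) − A(k,ξ−η)| ≤ C ((1+k²+(ξ−η)²)^(N/2) + (1+k²+ξ²)^(N/2)) |η|` for `k ≠ 0`. -/
theorem stmt14 (N C₀ : ℝ) (hN : 1 ≤ N) (hC₀ : 0 < C₀) :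
    ∃ C : ℝ, 0 < C ∧
      ∀ M : ℤ → ℝ → ℝ,
        (∀ k : ℤ, ContDiff ℝ 1 (M k)) →
        (∀ (k : ℤ) (ξ : ℝ), M k ξ ∈ Ioc (0 : ℝ) 1) →
        (∀ k : ℤ, k ≠ 0 → ∀ ξ : ℝ, |deriv (M k) ξ| ≤ C₀ / |(k : ℝ)|) →
        ∀ k : ℤ, k ≠ 0 → ∀ ξ η : ℝ,
          |(k : ℝ)| * |M k ξ * (1 + (k : ℝ) ^ 2 + ξ ^ 2) ^ (N / 2)
              - M k (ξ - η) * (1 + (k : ℝ) ^ 2 + (ξ - η) ^ 2) ^ (N / 2)|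
            ≤ C * ((1 + (k : ℝ) ^ 2 + (ξ - η) ^ 2) ^ (N / 2)
                + (1 + (k : ℝ) ^ 2 + ξ ^ 2) ^ (N / 2)) * |η| := by
  refine ⟨C₀ + |N|, by positivity, fun M hMC1 hMrange hMderiv k hk ξ η => ?_⟩
  have hkpos : (0 : ℝ) < |(k : ℝ)| := abs_pos.mpr (Int.cast_ne_zero.mpr hk)
  have hbound := abs_mul_abs_mul_bracketRpow_sub_le (N := N) (k := k) (by linarith)
    ((hMC1 k).differentiable one_ne_zero) (fun ζ => Ioc_subset_Icc_self (hMrange k ζ))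
    (fun ζ => (le_div_iff₀ hkpos).mp (hMderiv k hk ζ)) (ξ - η) ξ
  rwa [sub_sub_cancel] at hbound
end
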